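/- arXiv:2105.12061 — 2 statements merged into one kernel-verified Lean document; each statement's English description precedes it below -/
import Mathlib

section
/- Let M be a compact topological space, ρ : M × M → ℝ continuous, and X₁, X₂, … i.i.d. random variables on M. Define F(y) = E[ρ(X₁,y)] and Fₙ(y) = (1/n) ∑_{i=1}^n ρ(Xᵢ,y). Then almost surely, Fₙ → F uniformly on M, and consequently the sets of empirical minimizers Eₙ = arg min Fₙ satisfy the Ziezold strong consistency: almost surely ⋂_{n=1}^∞ closure(⋃_{k=n}^∞ E_k) ⊆ arg min F. -/
open MeasureTheory ProbabilityTheory Filter Set Topology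

/-- Uniform strong law and Ziezold strong consistency of generalized Fréchet mean
(M-)estimators on a compact space: for `ρ : M × M → ℝ` continuous and `X₁, X₂, …` i.i.d.,
almost surely the empirical objective functions `Fₙ(y) = (1/n) ∑_{i<n} ρ(Xᵢ, y)` converge
uniformly to `F(y) = E[ρ(X₀, y)]`, and
`⋂_{n=1}^∞ closure (⋃_{k=n}^∞ arg min F_k) ⊆ arg min F`. -/
theorem stmt17 {M : Type*} [TopologicalSpace M] [CompactSpace M] [Nonempty M]
    [mM : MeasurableSpace M] [BorelSpace M]
    (ρ : M × M → ℝ) (hρ : Continuous ρ)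
    {Ω : Type*} [MeasureSpace Ω] [IsProbabilityMeasure (ℙ : Measure Ω)]
    (X : ℕ → Ω → M) (hXm : ∀ i, Measurable (X i))
    (hindep : iIndepFun (m := fun _ => mM) X ℙ)
    (hid : ∀ i, IdentDistrib (X i) (X 0) ℙ ℙ) :
    ∀ᵐ ω ∂(ℙ : Measure Ω),
      TendstoUniformly
        (fun (n : ℕ) (y : M) => (n : ℝ)⁻¹ * ∑ i ∈ Finset.range n, ρ (X i ω, y))
        (fun y : M => ∫ ω', ρ (X 0 ω', y) ∂(ℙ : Measure Ω)) atTop ∧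
      (⋂ n : ℕ, closure (⋃ k : ℕ, ⋃ _ : n + 1 ≤ k,
          {y : M | ∀ z : M,
            (k : ℝ)⁻¹ * ∑ i ∈ Finset.range k, ρ (X i ω, y) ≤
            (k : ℝ)⁻¹ * ∑ i ∈ Finset.range k, ρ (X i ω, z)})) ⊆
        {y : M | ∀ z : M,
          ∫ ω', ρ (X 0 ω', y) ∂(ℙ : Measure Ω) ≤ ∫ ω', ρ (X 0 ω', z) ∂(ℙ : Measure Ω)} := by
  classical
  -- the curried map `Φ y = ρ (·, y)` into `C(M, ℝ)`
  set ρc : C(M × M, ℝ) := ⟨ρ, hρ⟩ with hρc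
  set Φ : C(M, C(M, ℝ)) := (ρc.comp ⟨Prod.swap, continuous_swap⟩).curry with hΦdef
  have hΦ : ∀ y x : M, Φ y x = ρ (x, y) := fun y x => rfl
  -- a uniform bound for ρ
  obtain ⟨C, hC⟩ : ∃ C : ℝ, ∀ p : M × M, ‖ρ p‖ ≤ C :=
    ⟨‖BoundedContinuousFunction.mkOfCompact ρc‖,
      fun p => (BoundedContinuousFunction.mkOfCompact ρc).norm_coe_le_norm p⟩
  have gm : ∀ y : M, Measurable fun x : M => ρ (x, y) := fun y =>
    (hρ.comp (continuous_id.prodMk continuous_const)).measurable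
  have hmeas : ∀ (y : M) (i : ℕ), Measurable fun ω => ρ (X i ω, y) := fun y i =>
    (gm y).comp (hXm i)
  have hint : ∀ (y : M) (i : ℕ), Integrable (fun ω => ρ (X i ω, y)) ℙ := fun y i =>
    (integrable_const C).mono' (hmeas y i).aestronglyMeasurable (ae_of_all _ fun ω => hC _)
  -- pointwise SLLN at each fixed `y`
  have slln : ∀ y : M, ∀ᵐ ω ∂(ℙ : Measure Ω),
      Tendsto (fun n : ℕ => (n : ℝ)⁻¹ * ∑ i ∈ Finset.range n, ρ (X i ω, y)) atTop
        (𝓝 (∫ ω', ρ (X 0 ω', y) ∂(ℙ : Measure Ω))) := by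
    intro y
    have h := strong_law_ae_real (fun i ω => ρ (X i ω, y)) (hint y 0)
      (fun i j hij => (hindep.indepFun hij).comp (gm y) (gm y))
      (fun i => (hid i).comp (gm y))
    filter_upwards [h] with ω hω
    simpa [div_eq_inv_mul] using hω
  -- finite nets in `M` for the sup distance of `Φ`
  have net : ∀ ε : ℝ, 0 < ε → ∃ s : Finset M, ∀ y : M, ∃ j ∈ s, dist (Φ y) (Φ j) < ε := by
    intro ε hε
    obtain ⟨s, hs⟩ := IsCompact.elim_finite_subcover (isCompact_univ (X := M))
      (fun j : M => Φ ⁻¹' Metric.ball (Φ j) ε)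
      (fun j => Metric.isOpen_ball.preimage Φ.continuous)
      (fun y _ => mem_iUnion.2 ⟨y, by simpa using hε⟩)
    refine ⟨s, fun y => ?_⟩
    obtain ⟨j, hj, hyj⟩ := mem_iUnion₂.1 (hs (mem_univ y))
    exact ⟨j, hj, by simpa [Metric.mem_ball] using hyj⟩
  choose s hs using fun k : ℕ => net (1 / ((k : ℝ) + 1)) (by positivity)
  -- almost sure event: SLLN simultaneously at all (countably many) net points
  have hae : ∀ᵐ ω ∂(ℙ : Measure Ω), ∀ p : Σ k : ℕ, (s k : Set M),
      Tendsto (fun n : ℕ => (n : ℝ)⁻¹ * ∑ i ∈ Finset.range n, ρ (X i ω, (p.2 : M))) atTop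
        (𝓝 (∫ ω', ρ (X 0 ω', (p.2 : M)) ∂(ℙ : Measure Ω))) :=
    ae_all_iff.2 fun p => slln p.2
  filter_upwards [hae] with ω hω
  set Fn : ℕ → M → ℝ := fun n y => (n : ℝ)⁻¹ * ∑ i ∈ Finset.range n, ρ (X i ω, y) with hFn
  set F : M → ℝ := fun y => ∫ ω', ρ (X 0 ω', y) ∂(ℙ : Measure Ω) with hF
  -- distance comparisons through Φ
  have key1 : ∀ y j : M, dist (F y) (F j) ≤ dist (Φ y) (Φ j) := by
    intro y j
    rw [Real.dist_eq, hF]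
    rw [← integral_sub (hint y 0) (hint j 0)]
    calc |∫ ω', (ρ (X 0 ω', y) - ρ (X 0 ω', j)) ∂(ℙ : Measure Ω)|
        ≤ ∫ ω', |ρ (X 0 ω', y) - ρ (X 0 ω', j)| ∂(ℙ : Measure Ω) := by
          simpa [Real.norm_eq_abs] using
            norm_integral_le_integral_norm (fun ω' => ρ (X 0 ω', y) - ρ (X 0 ω', j))
      _ ≤ ∫ _ω', dist (Φ y) (Φ j) ∂(ℙ : Measure Ω) := by
          refine integral_mono ((hint y 0).sub (hint j 0)).abs (integrable_const _) ?_
          intro ω'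
          have := ContinuousMap.dist_apply_le_dist (f := Φ y) (g := Φ j) (X 0 ω')
          simpa [Real.dist_eq, hΦ] using this
      _ = dist (Φ y) (Φ j) := by simp
  have key2 : ∀ n : ℕ, ∀ y j : M, dist (Fn n y) (Fn n j) ≤ dist (Φ y) (Φ j) := by
    intro n y j
    have hterm : ∀ x : M, |ρ (x, y) - ρ (x, j)| ≤ dist (Φ y) (Φ j) := by
      intro x
      have := ContinuousMap.dist_apply_le_dist (f := Φ y) (g := Φ j) x
      simpa [Real.dist_eq, hΦ] using this
    rw [Real.dist_eq, hFn]
    simp only [← mul_sub, ← Finset.sum_sub_distrib]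
    rw [abs_mul, abs_of_nonneg (by positivity : (0:ℝ) ≤ (n : ℝ)⁻¹)]
    calc (n : ℝ)⁻¹ * |∑ i ∈ Finset.range n, (ρ (X i ω, y) - ρ (X i ω, j))|
        ≤ (n : ℝ)⁻¹ * ∑ i ∈ Finset.range n, |ρ (X i ω, y) - ρ (X i ω, j)| := by
          gcongr
          exact Finset.abs_sum_le_sum_abs _ _
      _ ≤ (n : ℝ)⁻¹ * ∑ _i ∈ Finset.range n, dist (Φ y) (Φ j) := by
          gcongr with i hi
          exact hterm _
      _ = (n : ℝ)⁻¹ * ((n : ℝ) * dist (Φ y) (Φ j)) := by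
          simp [Finset.sum_const, mul_comm]
      _ ≤ dist (Φ y) (Φ j) := by
          rcases Nat.eq_zero_or_pos n with hn | hn
          · simp [hn, dist_nonneg]
          · rw [← mul_assoc, inv_mul_cancel₀ (by positivity : ((n : ℝ)) ≠ 0), one_mul]
  -- uniform convergence
  have huc : TendstoUniformly Fn F atTop := by
    rw [Metric.tendstoUniformly_iff]
    intro ε hε
    obtain ⟨k, hk⟩ : ∃ k : ℕ, 1 / ((k : ℝ) + 1) < ε / 3 := exists_nat_one_div_lt (by positivity)
    have h1 : ∀ᶠ n in atTop, ∀ j ∈ s k, dist (F j) (Fn n j) < ε / 3 := by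
      rw [eventually_all_finset]
      intro j hj
      have ht := hω ⟨k, ⟨j, hj⟩⟩
      have := (Metric.tendsto_nhds.1 ht) (ε / 3) (by positivity)
      filter_upwards [this] with n hn
      simpa [dist_comm, hFn, hF] using hn
    filter_upwards [h1] with n hn y
    obtain ⟨j, hj, hdj⟩ := hs k y
    have h2 : dist (Φ y) (Φ j) < ε / 3 := lt_trans hdj hk
    calc dist (F y) (Fn n y)
        ≤ dist (F y) (F j) + dist (F j) (Fn n j) + dist (Fn n j) (Fn n y) := dist_triangle4 _ _ _ _
      _ < ε / 3 + ε / 3 + ε / 3 := by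
          have a1 : dist (F y) (F j) < ε / 3 := lt_of_le_of_lt (key1 y j) h2
          have a3 : dist (Fn n j) (Fn n y) < ε / 3 := by
            rw [dist_comm]
            exact lt_of_le_of_lt (key2 n y j) h2
          have a2 := hn j hj
          linarith
      _ = ε := by ring
  have hFncont : ∀ n : ℕ, Continuous (Fn n) := by
    intro n
    exact continuous_const.mul (continuous_finset_sum _ fun i _ =>
      hρ.comp ((Continuous.prodMk_right (X i ω)).comp continuous_id))
  have hFcont : Continuous F := huc.continuous (Eventually.of_forall hFncont).frequently
  refine ⟨huc, ?_⟩
  -- Ziezold consistency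
  intro y hy
  intro z
  by_contra hcon
  push_neg at hcon
  set ε : ℝ := (F y - F z) / 3 with hε
  have hεpos : 0 < ε := by
    have : F z < F y := hcon
    simp only [hε]; linarith
  obtain ⟨N, hN⟩ : ∃ N : ℕ, ∀ n ≥ N, ∀ w : M, dist (F w) (Fn n w) < ε / 3 :=
    eventually_atTop.1 (Metric.tendstoUniformly_iff.1 huc (ε / 3) (by positivity))
  have hyN := mem_iInter.1 hy N
  have hU : {w : M | dist (F w) (F y) < ε / 3} ∈ 𝓝 y := by
    have : Metric.ball (F y) (ε / 3) ∈ 𝓝 (F y) := Metric.ball_mem_nhds _ (by positivity)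
    exact hFcont.continuousAt.preimage_mem_nhds this
  obtain ⟨y', hy'U, hy'E⟩ := mem_closure_iff_nhds.1 hyN _ hU
  obtain ⟨k, hkmem⟩ := mem_iUnion.1 hy'E
  obtain ⟨hkN, hy'k⟩ := mem_iUnion.1 hkmem
  have hkge : N ≤ k := le_trans (Nat.le_succ N) hkN
  have h1 : |F y' - F y| < ε / 3 := by simpa [Real.dist_eq] using hy'U
  have h2 : |F y' - Fn k y'| < ε / 3 := by
    have := hN k hkge y'
    simpa [Real.dist_eq] using this
  have h3 : Fn k y' ≤ Fn k z := hy'k z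
  have h4 : |F z - Fn k z| < ε / 3 := by
    have := hN k hkge z
    simpa [Real.dist_eq] using this
  have b1 := abs_lt.1 h1
  have b2 := abs_lt.1 h2
  have b4 := abs_lt.1 h4
  have : F y ≤ F z + ε := by linarith [b1.1, b1.2, b2.1, b2.2, b4.1, b4.2]
  simp only [hε] at this
  linarith
end

section
/- Let M be a compact metric space and F, F₁, F₂, … : M → ℝ continuous with Fₙ → F uniformly. Then min Fₙ → min F, and for every ε > 0 there exists N such that for all n ≥ N, arg min Fₙ ⊆ {y : dist(y, arg min F) < ε} (Bhattacharya–Patrangenaru convergence of minimizer sets). -/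
open Filter Set Topology Metric

lemma stmt18_min {M : Type*} [MetricSpace M] [CompactSpace M] [Nonempty M]
    (F : M → ℝ) (hF : Continuous F) : ∃ m : M, (∀ z, F m ≤ F z) ∧ ⨅ y : M, F y = F m := by
  obtain ⟨m, -, hm⟩ := isCompact_univ.exists_isMinOn univ_nonempty hF.continuousOn
  have hm' : ∀ z, F m ≤ F z := fun z => hm (mem_univ z)
  refine ⟨m, hm', le_antisymm (ciInf_le ⟨F m, ?_⟩ m) (le_ciInf hm')⟩
  rintro x ⟨y, rfl⟩; exact hm' y

/-- Deterministic core of Bhattacharya–Patrangenaru strong consistency: on a compact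
metric space, if continuous `Fₙ → F` uniformly, then `min Fₙ → min F` and for every
`ε > 0` the minimizer sets of `Fₙ` are eventually contained in the `ε`-neighborhood of
the minimizer set of `F`. -/
theorem stmt18 {M : Type*} [MetricSpace M] [CompactSpace M] [Nonempty M]
    (F : M → ℝ) (Fn : ℕ → M → ℝ)
    (hF : Continuous F) (hFn : ∀ n, Continuous (Fn n))
    (hunif : TendstoUniformly Fn F atTop) :
    Tendsto (fun n => ⨅ y : M, Fn n y) atTop (nhds (⨅ y : M, F y)) ∧
    ∀ ε > (0 : ℝ), ∃ N : ℕ, ∀ n ≥ N,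
      {y : M | ∀ z : M, Fn n y ≤ Fn n z} ⊆
        {y : M | infDist y {y' : M | ∀ z : M, F y' ≤ F z} < ε} := by
  obtain ⟨m, hm, hFm⟩ := stmt18_min F hF
  rw [Metric.tendstoUniformly_iff] at hunif
  constructor
  · rw [Metric.tendsto_atTop]
    intro ε hε
    obtain ⟨N, hN⟩ := eventually_atTop.mp (hunif (ε / 2) (by linarith))
    refine ⟨N, fun n hn => ?_⟩
    obtain ⟨mn, hmn, hFmn⟩ := stmt18_min (Fn n) (hFn n)
    rw [hFm, hFmn, Real.dist_eq, abs_lt]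
    have h1 := hN n hn m
    have h2 := hN n hn mn
    rw [Real.dist_eq, abs_lt] at h1 h2
    have h3 : Fn n mn ≤ Fn n m := hmn m
    have h4 : F m ≤ F mn := hm mn
    constructor <;> linarith
  · intro ε hε
    set A : Set M := {y' : M | ∀ z : M, F y' ≤ F z} with hA
    set K : Set M := {y : M | ε ≤ infDist y A} with hK
    have hKclosed : IsClosed K :=
      isClosed_le continuous_const (continuous_infDist_pt A)
    rcases K.eq_empty_or_nonempty with hKe | hKne
    · refine ⟨0, fun n _ y _ => ?_⟩
      by_contra h
      have hyK : y ∈ K := by rw [hK, mem_setOf_eq]; exact le_of_not_gt h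
      simp [hKe] at hyK
    · obtain ⟨y₀, hy₀K, hy₀⟩ :=
        hKclosed.isCompact.exists_isMinOn hKne hF.continuousOn
      have hy₀A : y₀ ∉ A := by
        intro hmem
        have h0 : infDist y₀ A = 0 := infDist_zero_of_mem hmem
        have h1 : ε ≤ infDist y₀ A := hy₀K
        rw [h0] at h1
        linarith
      have hlt : F m < F y₀ := by
        by_contra h
        push_neg at h
        exact hy₀A (fun z => h.trans (hm z))
      set δ : ℝ := (F y₀ - F m) / 3 with hδ
      have hδpos : 0 < δ := by rw [hδ]; linarith
      obtain ⟨N, hN⟩ := eventually_atTop.mp (hunif δ hδpos)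
      refine ⟨N, fun n hn y hy => ?_⟩
      by_contra h
      have hyK : y ∈ K := by rw [hK, mem_setOf_eq]; exact le_of_not_gt h
      have h1 := hN n hn y
      have h2 := hN n hn m
      rw [Real.dist_eq, abs_lt] at h1 h2
      have h3 : F y₀ ≤ F y := hy₀ hyK
      have h4 : Fn n y ≤ Fn n m := hy m
      rw [hδ] at h1 h2
      linarith
end
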